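/- arXiv:0706.2619 — 6 statements merged into one kernel-verified Lean document; each statement's English description precedes it below -/
import Mathlib

section
/- Let G be a game structure of imperfect information, G^K its knowledge-based subset construction, and φ ⊆ (O×Σ)^ω an objective. If Player 1 has a deterministic sure-winning strategy in G^K for φ, then Player 1 has a deterministic observation-based sure-winning strategy in G for φ. -/
open scoped ENNReal

/-- A game structure of imperfect information: states `L`, alphabet `A`,
observations `O`.  The observation sets are nonempty and partition `L`. -/
structure GameStruct (L A O : Type) where
  init : L
  trans : L → A → L → Prop
  total : ∀ l a, ∃ l', trans l a l'
  obsSet : O → Set L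
  obs_nonempty : ∀ o, (obsSet o).Nonempty
  obs_cover : ∀ l, ∃ o, l ∈ obsSet o
  obs_disjoint : ∀ o o' l, l ∈ obsSet o → l ∈ obsSet o' → o = o'

/-- A finite alternating sequence `l₀ a₀ l₁ … a_{n-1} l_n`. -/
inductive Pref (L A : Type) : Type where
  | first : L → Pref L A
  | snoc : Pref L A → A → L → Pref L A

namespace Pref

variable {L A L' A' : Type}

def last : Pref L A → L
  | .first l => l
  | .snoc _ _ l => l

def start : Pref L A → L
  | .first l => l
  | .snoc ρ _ _ => ρ.start

def length : Pref L A → ℕ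
  | .first _ => 1
  | .snoc ρ _ _ => ρ.length + 1

/-- All steps of the sequence are transitions of `Δ`. -/
def Steps (Δ : L → A → L → Prop) : Pref L A → Prop
  | .first _ => True
  | .snoc ρ a l => Steps Δ ρ ∧ Δ ρ.last a l

def map (f : L → L') (g : A → A') : Pref L A → Pref L' A'
  | .first l => .first (f l)
  | .snoc ρ a l => .snoc (map f g ρ) (g a) (f l)

end Pref

namespace GameStruct

variable {L A O : Type}

/-- The unique observation of a state. -/
noncomputable def obsOf (G : GameStruct L A O) (l : L) : O := (G.obs_cover l).choose

/-- The set of prefixes of the game `G`. -/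
def Prefs (G : GameStruct L A O) : Set (Pref L A) :=
  {ρ | ρ.start = G.init ∧ Pref.Steps G.trans ρ}

/-- The observation sequence `γ⁻¹(ρ)` of a prefix. -/
noncomputable def obsSeq (G : GameStruct L A O) (ρ : Pref L A) : Pref O A :=
  ρ.map G.obsOf id

def Post (G : GameStruct L A O) (a : A) (s : Set L) : Set L :=
  {l' | ∃ l ∈ s, G.trans l a l'}

/-- The knowledge associated with a finite observation sequence. -/
noncomputable def K (G : GameStruct L A O) (τ : Pref O A) : Set L :=
  {l | ∃ ρ ∈ G.Prefs, G.obsSeq ρ = τ ∧ ρ.last = l}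

/-- Observation-based deterministic Player-1 strategy. -/
def ObsBased (G : GameStruct L A O) (α : Pref L A → A) : Prop :=
  ∀ ρ ∈ G.Prefs, ∀ ρ' ∈ G.Prefs, G.obsSeq ρ = G.obsSeq ρ' → α ρ = α ρ'

/-- Deterministic Player-2 strategy (validity condition). -/
def IsStrat2 (G : GameStruct L A O) (β : Pref L A → A → L) : Prop :=
  ∀ ρ ∈ G.Prefs, ∀ a, G.trans ρ.last a (β ρ a)

/-- Counting Player-2 strategy. -/
def Counting (G : GameStruct L A O) (β : Pref L A → A → L) : Prop :=
  ∀ ρ ∈ G.Prefs, ∀ ρ' ∈ G.Prefs,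
    ρ.length = ρ'.length → ρ.last = ρ'.last → ∀ a, β ρ a = β ρ' a

end GameStruct

/-- The sequence of prefixes resulting from playing `α` against `β` from `s0`. -/
def outPrefGen {S A : Type} (s0 : S) (α : Pref S A → A) (β : Pref S A → A → S) : ℕ → Pref S A
  | 0 => .first s0
  | n + 1 =>
      .snoc (outPrefGen s0 α β n) (α (outPrefGen s0 α β n))
        (β (outPrefGen s0 α β n) (α (outPrefGen s0 α β n)))

/-- The outcome play (state stream, letter stream) of `α` against `β` from `s0`. -/
def outcomeGen {S A : Type} (s0 : S) (α : Pref S A → A) (β : Pref S A → A → S) :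
    (ℕ → S) × (ℕ → A) :=
  (fun n => (outPrefGen s0 α β n).last, fun n => α (outPrefGen s0 α β n))

namespace GameStruct

variable {L A O : Type}

/-- Transition relation `Δᴷ` of the knowledge-based subset construction `Gᴷ`. -/
def transK (G : GameStruct L A O) (s1 : Set L) (a : A) (s2 : Set L) : Prop :=
  (∃ o, s2 = G.Post a s1 ∩ G.obsSet o) ∧ s2.Nonempty

/-- Prefixes of the game `Gᴷ` of perfect information. -/
def PrefsK (G : GameStruct L A O) : Set (Pref (Set L) A) :=
  {ρ | ρ.start = {G.init} ∧ Pref.Steps G.transK ρ}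

/-- A cell `s` is reachable in `Gᴷ`. -/
def ReachableK (G : GameStruct L A O) (s : Set L) : Prop :=
  ∃ ρ ∈ G.PrefsK, ρ.last = s

open Classical in
/-- The unique observation `o` with `s ⊆ γ(o)` (when it exists). -/
noncomputable def obsK (G : GameStruct L A O) (s : Set L) : O :=
  if h : ∃ o, s ⊆ G.obsSet o then h.choose else G.obsOf G.init

/-- Deterministic Player-2 strategy in `Gᴷ` (validity condition). -/
def IsStrat2K (G : GameStruct L A O) (β : Pref (Set L) A → A → Set L) : Prop :=
  ∀ ρ ∈ G.PrefsK, ∀ a, G.transK ρ.last a (β ρ a)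

/-- Player 1 sure wins `G` for objective `φ ⊆ (O × Σ)^ω` with a deterministic
observation-based strategy. -/
def SureWinG (G : GameStruct L A O) (φ : Set ((ℕ → O) × (ℕ → A))) : Prop :=
  ∃ α : Pref L A → A, G.ObsBased α ∧
    ∀ β, G.IsStrat2 β →
      ((fun n => G.obsOf ((outcomeGen G.init α β).1 n)), (outcomeGen G.init α β).2) ∈ φ

/-- Player 1 sure wins `Gᴷ` for objective `φ ⊆ (O × Σ)^ω` with a deterministic strategy. -/
def SureWinK (G : GameStruct L A O) (φ : Set ((ℕ → O) × (ℕ → A))) : Prop :=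
  ∃ α : Pref (Set L) A → A,
    ∀ β, G.IsStrat2K β →
      ((fun n => G.obsK ((outcomeGen ({G.init} : Set L) α β).1 n)),
        (outcomeGen ({G.init} : Set L) α β).2) ∈ φ

end GameStruct

/-- `⌈q⌉`, the set of maximal elements of `q`. -/
def ceil {L : Type} (q : Set (Set L)) : Set (Set L) :=
  {s | s ∈ q ∧ s.Nonempty ∧ ∀ s' ∈ q, ¬ s ⊂ s'}

/-- `q` is an antichain of nonempty subsets of `L`. -/
def IsAC {L : Type} (q : Set (Set L)) : Prop :=
  (∀ s ∈ q, s.Nonempty) ∧ ∀ s ∈ q, ∀ s' ∈ q, ¬ s ⊂ s'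

/-- The type of antichains of nonempty subsets of `L`. -/
def ACL (L : Type) : Type := {q : Set (Set L) // IsAC q}

/-- The order `⊑` on antichains. -/
def acle {L : Type} (q q' : ACL L) : Prop := ∀ s ∈ q.1, ∃ s' ∈ q'.1, s ⊆ s'

theorem ceil_isAC {L : Type} (q : Set (Set L)) : IsAC (ceil q) :=
  ⟨fun _ hs => hs.2.1, fun _ hs s' hs' => hs.2.2 s' hs'.1⟩

/-- The join `q ⊔ q' = ⌈{s | s ∈ q or s ∈ q'}⌉`. -/
def joinOp {L : Type} (q q' : Set (Set L)) : Set (Set L) := ceil (q ∪ q')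

/-- The meet `q ⊓ q' = ⌈{s ∩ s' | s ∈ q and s' ∈ q'}⌉`. -/
def meetOp {L : Type} (q q' : Set (Set L)) : Set (Set L) :=
  ceil {t | ∃ s ∈ q, ∃ s' ∈ q', t = s ∩ s'}

theorem topAC (L : Type) [Nonempty L] : IsAC ({Set.univ} : Set (Set L)) := by
  constructor
  · intro s hs
    rw [Set.mem_singleton_iff] at hs
    subst hs
    exact Set.univ_nonempty
  · intro s hs s' hs'
    rw [Set.mem_singleton_iff] at hs hs'
    subst hs; subst hs'
    exact fun h => absurd h (lt_irrefl _)

theorem botAC (L : Type) : IsAC (∅ : Set (Set L)) :=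
  ⟨fun s hs => absurd hs (Set.notMem_empty s),
   fun s hs => absurd hs (Set.notMem_empty s)⟩

/-- `q ⊆ 𝓛`, i.e. all members of `q` are nonempty. -/
def NESets {L : Type} (q : Set (Set L)) : Prop := ∀ s ∈ q, s.Nonempty

/-- `q` is downward closed (within nonempty sets). -/
def DownClosed {L : Type} (q : Set (Set L)) : Prop :=
  ∀ s ∈ q, ∀ t, t ⊆ s → t.Nonempty → t ∈ q

namespace GameStruct

variable {L A O : Type}

/-- Controllable predecessor operator on `2^𝓛` (w.r.t. `Gᴷ`). -/
def CPre (G : GameStruct L A O) (q : Set (Set L)) : Set (Set L) :=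
  {s | s.Nonempty ∧ ∃ a, ∀ s', G.transK s a s' → s' ∈ q}

end GameStruct

/-- μ-calculus formulas over atomic propositions `O` and variables `V`. -/
inductive MuForm (O V : Type) : Type where
  | atom : O → MuForm O V
  | var : V → MuForm O V
  | or : MuForm O V → MuForm O V → MuForm O V
  | and : MuForm O V → MuForm O V → MuForm O V
  | pre : MuForm O V → MuForm O V
  | mu : V → MuForm O V → MuForm O V
  | nu : V → MuForm O V → MuForm O V

/-- Semantics of μ-calculus formulas in the lattice of subsets `S = 2^𝓛`. -/
def semS {L A O V : Type} [DecidableEq V] (G : GameStruct L A O) :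
    MuForm O V → (V → Set (Set L)) → Set (Set L)
  | .atom o, _ => {s | s.Nonempty ∧ s ⊆ G.obsSet o}
  | .var x, E => E x
  | .or φ ψ, E => semS G φ E ∪ semS G ψ E
  | .and φ ψ, E => semS G φ E ∩ semS G ψ E
  | .pre φ, E => G.CPre (semS G φ E)
  | .mu x φ, E => ⋂₀ {q | NESets q ∧ q = semS G φ (Function.update E x q)}
  | .nu x φ, E => ⋃₀ {q | NESets q ∧ q = semS G φ (Function.update E x q)}

/-- Greatest lower bound of a family of antichains. -/
def sInfA {L : Type} (Q : Set (Set (Set L))) : Set (Set L) :=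
  ceil {s | s.Nonempty ∧ ∀ q ∈ Q, ∃ s' ∈ q, s ⊆ s'}

/-- Least upper bound of a family of antichains. -/
def sSupA {L : Type} (Q : Set (Set (Set L))) : Set (Set L) := ceil (⋃₀ Q)

/-- The antichain controllable predecessor operator `⌈CPre⌉`. -/
def GameStruct.cpreA {L A O : Type} (G : GameStruct L A O) (q : Set (Set L)) : Set (Set L) :=
  ceil {s | s.Nonempty ∧ ∃ a, ∀ o, ∃ s' ∈ q, G.Post a s ∩ G.obsSet o ⊆ s'}

/-- Semantics of μ-calculus formulas in the lattice of antichains. -/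
def semA {L A O V : Type} [DecidableEq V] (G : GameStruct L A O) :
    MuForm O V → (V → Set (Set L)) → Set (Set L)
  | .atom o, _ => {G.obsSet o}
  | .var x, E => E x
  | .or φ ψ, E => joinOp (semA G φ E) (semA G ψ E)
  | .and φ ψ, E => meetOp (semA G φ E) (semA G ψ E)
  | .pre φ, E => G.cpreA (semA G φ E)
  | .mu x φ, E => sInfA {q | IsAC q ∧ q = semA G φ (Function.update E x q)}
  | .nu x φ, E => sSupA {q | IsAC q ∧ q = semA G φ (Function.update E x q)}

namespace GameStruct

variable {L A O : Type}

/-- Membership in the state set `Q` of `H = Knw(G)`. -/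
def inQ (G : GameStruct L A O) (p : Set L × L) : Prop :=
  (∃ o, p.1 ⊆ G.obsSet o) ∧ p.2 ∈ p.1

/-- The transition relation `Δ_H` of `H = Knw(G)` (restricted to `Q`). -/
def transH (G : GameStruct L A O) (p : Set L × L) (a : A) (p' : Set L × L) : Prop :=
  G.inQ p ∧ G.inQ p' ∧ (∃ o, p'.1 = G.Post a p.1 ∩ G.obsSet o) ∧ G.trans p.2 a p'.2

/-- The map `h : Prefs(G) → Prefs(H)`. -/
noncomputable def hmap (G : GameStruct L A O) : Pref L A → Pref (Set L × L) A
  | .first l => .first (G.K (G.obsSeq (.first l)), l)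
  | .snoc ρ a l => .snoc (G.hmap ρ) a (G.K (G.obsSeq (.snoc ρ a l)), l)

/-- Prefixes of `H = Knw(G)`. -/
def PrefsH (G : GameStruct L A O) : Set (Pref (Set L × L) A) :=
  {ρ | ρ.start = ({G.init}, G.init) ∧ Pref.Steps G.transH ρ}

end GameStruct

/-- Equivalence `≈` of prefixes of `H`. -/
def prefEquiv {L A : Type} : Pref (Set L × L) A → Pref (Set L × L) A → Prop
  | .first q, .first q' => q.1 = q'.1
  | .snoc ρ a q, .snoc ρ' a' q' => prefEquiv ρ ρ' ∧ a = a' ∧ q.1 = q'.1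
  | _, _ => False

/-- Randomized Player-1 strategy (each value is a probability distribution). -/
def IsP1Rand {S A : Type} (α : Pref S A → A → ℝ≥0∞) : Prop := ∀ ρ, (∑' a, α ρ a) = 1

namespace GameStruct

variable {L A O : Type}

/-- Observation-based randomized Player-1 strategy in `G`. -/
def ObsBasedR (G : GameStruct L A O) (α : Pref L A → A → ℝ≥0∞) : Prop :=
  ∀ ρ ∈ G.Prefs, ∀ ρ' ∈ G.Prefs, G.obsSeq ρ = G.obsSeq ρ' → α ρ = α ρ'

/-- Equivalence-preserving randomized Player-1 strategy in `H` (on `Prefs(H)`). -/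
def EqPres (G : GameStruct L A O) (α : Pref (Set L × L) A → A → ℝ≥0∞) : Prop :=
  ∀ ρ ∈ G.PrefsH, ∀ ρ' ∈ G.PrefsH, prefEquiv ρ ρ' → α ρ = α ρ'

/-- Equivalence-preserving randomized Player-1 strategy in `H` (on all valid
prefixes of `H`, from arbitrary start states). -/
def EqPres' (G : GameStruct L A O) (α : Pref (Set L × L) A → A → ℝ≥0∞) : Prop :=
  ∀ ρ ρ' : Pref (Set L × L) A, Pref.Steps G.transH ρ → Pref.Steps G.transH ρ' →
    prefEquiv ρ ρ' → α ρ = α ρ'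

/-- Randomized Player-2 strategy in `G` (validity). -/
def IsP2RandG (G : GameStruct L A O) (β : Pref L A → A → L → ℝ≥0∞) : Prop :=
  ∀ ρ a, (∑' l, β ρ a l) = 1 ∧ ∀ l, β ρ a l ≠ 0 → G.trans ρ.last a l

/-- Randomized Player-2 strategy in `H` (validity). -/
def IsP2RandH (G : GameStruct L A O)
    (β : Pref (Set L × L) A → A → (Set L × L) → ℝ≥0∞) : Prop :=
  ∀ ρ a, G.inQ (Pref.last ρ) →
    (∑' q, β ρ a q) = 1 ∧ ∀ q, β ρ a q ≠ 0 → G.transH ρ.last a q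

end GameStruct

/-- `ḡ` on Player-1 strategies. -/
noncomputable def gbar1 {L A O : Type} (G : GameStruct L A O)
    (αH : Pref (Set L × L) A → A → ℝ≥0∞) : Pref L A → A → ℝ≥0∞ :=
  fun ρ => αH (G.hmap ρ)

/-- The projection `h⁻¹ : Prefs(H) → Prefs(G)`. -/
def projH {L A : Type} : Pref (Set L × L) A → Pref L A := Pref.map Prod.snd id

/-- `h̄` on Player-1 strategies. -/
def hbar1 {L A : Type} (αG : Pref L A → A → ℝ≥0∞) :
    Pref (Set L × L) A → A → ℝ≥0∞ := fun ρ => αG (projH ρ)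

/-- `ḡ` on Player-2 strategies: `ḡ(β_H)(ρ,a)(l') = β_H(h(ρ),a)(s',l')` for the unique
`s'` with `((K(γ⁻¹(ρ)), Last ρ), a, (s',l')) ∈ Δ_H`, and `0` if there is none. -/
noncomputable def GameStruct.gbar2 {L A O : Type} (G : GameStruct L A O)
    (βH : Pref (Set L × L) A → A → (Set L × L) → ℝ≥0∞) : Pref L A → A → L → ℝ≥0∞ :=
  fun ρ a l' =>
    ∑' s' : {s' : Set L // G.transH (G.K (G.obsSeq ρ), ρ.last) a (s', l')},
      βH (G.hmap ρ) a (s'.1, l')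

open Classical in
/-- `h̄` on Player-2 strategies. -/
noncomputable def GameStruct.hbar2 {L A O : Type} (G : GameStruct L A O)
    (βG : Pref L A → A → L → ℝ≥0∞) :
    Pref (Set L × L) A → A → (Set L × L) → ℝ≥0∞ :=
  fun ρ a q => if G.transH ρ.last a q then βG (projH ρ) a q.2 else 0

open Classical in
/-- The probability of the cone of a prefix under a pair of randomized
strategies, starting from `s0`. -/
noncomputable def conePr {S A : Type} (s0 : S)
    (α : Pref S A → A → ℝ≥0∞) (β : Pref S A → A → S → ℝ≥0∞) : Pref S A → ℝ≥0∞
  | .first s => if s = s0 then 1 else 0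
  | .snoc ρ a s => conePr s0 α β ρ * α ρ a * β ρ a s

section AuxK

variable {L A O : Type}

/-- Knowledge prefix associated to an observation sequence. -/
noncomputable def kcellMap (G : GameStruct L A O) : Pref O A → Pref (Set L) A
  | .first _ => .first {G.init}
  | .snoc τ a o => .snoc (kcellMap G τ) a (G.Post a (kcellMap G τ).last ∩ G.obsSet o)

lemma Pref.map_length {L' A' : Type} (f : L → L') (g : A → A') (ρ : Pref L A) :
    (ρ.map f g).length = ρ.length := by
  induction ρ with
  | first l => rfl
  | snoc ρ a l ih => simp [Pref.map, Pref.length, ih]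

lemma kcellMap_length (G : GameStruct L A O) (τ : Pref O A) :
    (kcellMap G τ).length = τ.length := by
  induction τ with
  | first o => rfl
  | snoc τ a o ih => simp [kcellMap, Pref.length, ih]

lemma outPrefGen_length {S : Type} (s0 : S) (α : Pref S A → A) (β : Pref S A → A → S)
    (n : ℕ) : (outPrefGen s0 α β n).length = n + 1 := by
  induction n with
  | zero => rfl
  | succ n ih => simp [outPrefGen, Pref.length, ih]

lemma obsK_eq_obsOf (G : GameStruct L A O) {s : Set L} {l : L} (hl : l ∈ s)
    (hs : s ⊆ G.obsSet (G.obsOf l)) : G.obsK s = G.obsOf l := by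
  have h : ∃ o, s ⊆ G.obsSet o := ⟨_, hs⟩
  rw [GameStruct.obsK, dif_pos h]
  exact G.obs_disjoint _ _ l (h.choose_spec hl) (hs hl)

/-- The fundamental invariant of the outcome prefixes of `G`. -/
lemma outcome_invariant (G : GameStruct L A O) (α : Pref L A → A)
    (β : Pref L A → A → L) (hβ : G.IsStrat2 β) (n : ℕ) :
    outPrefGen G.init α β n ∈ G.Prefs ∧
    (outPrefGen G.init α β n).last ∈ (kcellMap G (G.obsSeq (outPrefGen G.init α β n))).last ∧
    (kcellMap G (G.obsSeq (outPrefGen G.init α β n))).last ⊆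
      G.obsSet (G.obsOf (outPrefGen G.init α β n).last) := by
  induction n with
  | zero =>
      refine ⟨⟨rfl, trivial⟩, rfl, ?_⟩
      intro x hx
      rw [Set.mem_singleton_iff.mp hx]
      exact (G.obs_cover G.init).choose_spec
  | succ n ih =>
      obtain ⟨hpref, hmem, hsub⟩ := ih
      set ρ := outPrefGen G.init α β n with hρ
      have htrans : G.trans ρ.last (α ρ) (β ρ (α ρ)) := hβ ρ hpref (α ρ)
      refine ⟨⟨hpref.1, hpref.2, htrans⟩, ?_, ?_⟩
      · exact ⟨⟨ρ.last, hmem, htrans⟩, (G.obs_cover _).choose_spec⟩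
      · exact fun x hx => hx.2

lemma prefsK_last_nonempty (G : GameStruct L A O) (σ : Pref (Set L) A)
    (hσ : σ ∈ G.PrefsK) : σ.last.Nonempty := by
  obtain ⟨hstart, hsteps⟩ := hσ
  cases σ with
  | first s =>
      have : s = {G.init} := hstart
      exact this ▸ Set.singleton_nonempty _
  | snoc ρ a s => exact hsteps.2.2

open Classical in
/-- Player-2 strategy in `Gᴷ` simulating `β` in `G` along the outcome. -/
noncomputable def betaK (G : GameStruct L A O) (α : Pref L A → A)
    (β : Pref L A → A → L) : Pref (Set L) A → A → Set L :=
  fun σ a =>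
    if σ = kcellMap G (G.obsSeq (outPrefGen G.init α β (σ.length - 1))) ∧
        a = α (outPrefGen G.init α β (σ.length - 1)) then
      G.Post a σ.last ∩ G.obsSet (G.obsOf (β (outPrefGen G.init α β (σ.length - 1)) a))
    else if h : ∃ s', G.transK σ.last a s' then h.choose else σ.last

lemma betaK_valid (G : GameStruct L A O) (α : Pref L A → A)
    (β : Pref L A → A → L) (hβ : G.IsStrat2 β) : G.IsStrat2K (betaK G α β) := by
  intro σ hσ a
  classical
  rw [betaK]
  split_ifs with hcond hex
  · obtain ⟨hc, _⟩ := hcond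
    set ρ := outPrefGen G.init α β (σ.length - 1) with hρ
    obtain ⟨hpref, hmem, _⟩ := outcome_invariant G α β hβ (σ.length - 1)
    have hlast : σ.last = (kcellMap G (G.obsSeq ρ)).last := by rw [hc]
    refine ⟨⟨_, rfl⟩, ⟨β ρ a, ⟨ρ.last, hlast ▸ hmem, hβ ρ hpref a⟩,
      (G.obs_cover _).choose_spec⟩⟩
  · exact hex.choose_spec
  · exfalso
    apply hex
    obtain ⟨l, hl⟩ := prefsK_last_nonempty G σ hσ
    obtain ⟨l', hl'⟩ := G.total l a
    exact ⟨G.Post a σ.last ∩ G.obsSet (G.obsOf l'),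
      ⟨⟨_, rfl⟩, ⟨l', ⟨⟨l, hl, hl'⟩, (G.obs_cover l').choose_spec⟩⟩⟩⟩

/-- The outcome of `(αK, betaK)` in `Gᴷ` is the knowledge prefix of the
outcome of `(α, β)` in `G`. -/
lemma outcome_eq (G : GameStruct L A O) (αK : Pref (Set L) A → A)
    (β : Pref L A → A → L) (n : ℕ) :
    outPrefGen ({G.init} : Set L) αK
        (betaK G (fun ρ => αK (kcellMap G (G.obsSeq ρ))) β) n =
      kcellMap G (G.obsSeq (outPrefGen G.init
        (fun ρ => αK (kcellMap G (G.obsSeq ρ))) β n)) := by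
  classical
  set α : Pref L A → A := fun ρ => αK (kcellMap G (G.obsSeq ρ)) with hα
  induction n with
  | zero => rfl
  | succ n ih =>
      set ρ := outPrefGen G.init α β n with hρ
      show Pref.snoc _ _ _ = _
      rw [ih]
      have hbK : betaK G α β (kcellMap G (G.obsSeq ρ))
            (αK (kcellMap G (G.obsSeq ρ))) =
          G.Post (αK (kcellMap G (G.obsSeq ρ))) (kcellMap G (G.obsSeq ρ)).last ∩
            G.obsSet (G.obsOf (β ρ (αK (kcellMap G (G.obsSeq ρ))))) := by
        rw [betaK]
        have hlen2 : (kcellMap G (G.obsSeq ρ)).length - 1 = n := by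
          rw [kcellMap_length, GameStruct.obsSeq, Pref.map_length, hρ, outPrefGen_length]
          omega
        rw [hlen2]
        exact if_pos ⟨rfl, rfl⟩
      rw [hbK]
      rfl

end AuxK

section Theorems

variable {L A O V : Type}

theorem stmt_3 [Finite L] [Finite A] [Finite O] (G : GameStruct L A O)
    (φ : Set ((ℕ → O) × (ℕ → A))) :
    G.SureWinK φ → G.SureWinG φ := by
  rintro ⟨αK, hK⟩
  refine ⟨fun ρ => αK (kcellMap G (G.obsSeq ρ)), ?_, ?_⟩
  · intro ρ _ ρ' _ h
    dsimp only
    rw [h]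
  · intro β hβ
    set α : Pref L A → A := fun ρ => αK (kcellMap G (G.obsSeq ρ)) with hα
    have hwin := hK (betaK G α β) (betaK_valid G α β hβ)
    have heq : ((fun n => G.obsK ((outcomeGen ({G.init} : Set L) αK (betaK G α β)).1 n)),
        (outcomeGen ({G.init} : Set L) αK (betaK G α β)).2) =
        ((fun n => G.obsOf ((outcomeGen G.init α β).1 n)), (outcomeGen G.init α β).2) := by
      refine Prod.ext ?_ ?_
      · funext n
        show G.obsK (outPrefGen ({G.init} : Set L) αK (betaK G α β) n).last = _
        rw [outcome_eq]
        obtain ⟨_, hmem, hsub⟩ := outcome_invariant G α β hβ n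
        exact obsK_eq_obsOf G hmem hsub
      · funext n
        show αK (outPrefGen ({G.init} : Set L) αK (betaK G α β) n) = _
        rw [outcome_eq]
        rfl
    rw [← heq]
    exact hwin

end Theorems
end

section
/- Let G be a game structure of imperfect information, G^K its knowledge-based subset construction, and φ ⊆ (O×Σ)^ω an objective. If Player 1 has a deterministic observation-based sure-winning strategy in G for φ, then Player 1 has a deterministic sure-winning strategy in G^K for φ. -/
open scoped ENNReal

/-- The intersection of an antitone sequence of nonempty subsets of a finite
type is nonempty. -/
lemma iInter_nonempty_of_antitone {L : Type} [Finite L] (f : ℕ → Set L)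
    (hdec : ∀ m, f (m + 1) ⊆ f m) (hne : ∀ m, (f m).Nonempty) :
    (⋂ m, f m).Nonempty := by
  have hmono : ∀ {m m'}, m ≤ m' → f m' ⊆ f m := by
    intro m m' h
    induction h with
    | refl => exact subset_rfl
    | step h ih => exact (hdec _).trans ih
  obtain ⟨m0, hm0⟩ : ∃ m0, (f m0).ncard = sInf (Set.range fun m => (f m).ncard) := by
    have h : sInf (Set.range fun m => (f m).ncard) ∈ Set.range fun m => (f m).ncard :=
      Nat.sInf_mem ⟨(f 0).ncard, 0, rfl⟩
    obtain ⟨m0, h⟩ := h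
    exact ⟨m0, h⟩
  have hmin : ∀ m, (f m0).ncard ≤ (f m).ncard := fun m =>
    hm0 ▸ Nat.sInf_le ⟨m, rfl⟩
  have hsub0 : ∀ m, f m0 ⊆ f m := by
    intro m
    have h1 : f (max m m0) ⊆ f m0 := hmono (le_max_right _ _)
    have h2 : f (max m m0) ⊆ f m := hmono (le_max_left _ _)
    have h3 : f (max m m0) = f m0 :=
      Set.eq_of_subset_of_ncard_le h1 (hmin _) (Set.toFinite _)
    exact h3 ▸ h2
  obtain ⟨x, hx⟩ := hne m0
  exact ⟨x, Set.mem_iInter.2 fun m => hsub0 m hx⟩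

/-- Dependent-choice chain through a sequence of sets. -/
noncomputable def chainAux {L : Type} (S : ℕ → Set L) (R : ℕ → L → L → Prop) (x0 : L)
    (h0 : x0 ∈ S 0) (hstep : ∀ n x, x ∈ S n → ∃ y, y ∈ S (n + 1) ∧ R n x y) :
    ∀ n, {x : L // x ∈ S n}
  | 0 => ⟨x0, h0⟩
  | n + 1 =>
    ⟨(hstep n (chainAux S R x0 h0 hstep n).1 (chainAux S R x0 h0 hstep n).2).choose,
      (hstep n (chainAux S R x0 h0 hstep n).1 (chainAux S R x0 h0 hstep n).2).choose_spec.1⟩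

lemma exists_chain {L : Type} (S : ℕ → Set L) (R : ℕ → L → L → Prop) (x0 : L)
    (h0 : x0 ∈ S 0) (hstep : ∀ n x, x ∈ S n → ∃ y, y ∈ S (n + 1) ∧ R n x y) :
    ∃ c : ℕ → L, c 0 = x0 ∧ (∀ n, c n ∈ S n) ∧ ∀ n, R n (c n) (c (n + 1)) := by
  refine ⟨fun n => (chainAux S R x0 h0 hstep n).1, rfl,
    fun n => (chainAux S R x0 h0 hstep n).2, fun n => ?_⟩
  have h := (hstep n (chainAux S R x0 h0 hstep n).1 (chainAux S R x0 h0 hstep n).2).choose_spec.2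
  have he : (chainAux S R x0 h0 hstep (n + 1)).1
      = (hstep n (chainAux S R x0 h0 hstep n).1 (chainAux S R x0 h0 hstep n).2).choose := by
    simp [chainAux]
  show R n (chainAux S R x0 h0 hstep n).1 (chainAux S R x0 h0 hstep (n + 1)).1
  rw [he]
  exact h

/-- The prefix `c 0, a 0, c 1, …, a (n-1), c n`. -/
def buildPref {L A : Type} (c : ℕ → L) (a : ℕ → A) : ℕ → Pref L A
  | 0 => .first (c 0)
  | n + 1 => .snoc (buildPref c a n) (a n) (c (n + 1))

lemma buildPref_last {L A : Type} (c : ℕ → L) (a : ℕ → A) (n : ℕ) :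
    (buildPref c a n).last = c n := by cases n <;> rfl

lemma buildPref_length {L A : Type} (c : ℕ → L) (a : ℕ → A) (n : ℕ) :
    (buildPref c a n).length = n + 1 := by
  induction n with
  | zero => rfl
  | succ n ih => simp [buildPref, Pref.length, ih]


section Theorems

variable {L A O V : Type}

theorem stmt_4 [Finite L] [Finite A] [Finite O] (G : GameStruct L A O)
    (φ : Set ((ℕ → O) × (ℕ → A))) :
    G.SureWinG φ → G.SureWinK φ := by
  classical
  rintro ⟨α, hobs, hwin⟩
  set f : Pref O A → A := fun τ =>
    if h : ∃ ρ ∈ G.Prefs, G.obsSeq ρ = τ then α h.choose else α (.first G.init) with hf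
  set αK : Pref (Set L) A → A := fun ρ => f (ρ.map G.obsK id) with hαK
  refine ⟨αK, ?_⟩
  intro βK hβK
  set ρK : ℕ → Pref (Set L) A := fun n => outPrefGen ({G.init} : Set L) αK βK n with hρKdef
  set s : ℕ → Set L := fun n => (ρK n).last with hsdef
  set aK : ℕ → A := fun n => αK (ρK n) with haK
  have hρKsucc : ∀ n, ρK (n + 1) = .snoc (ρK n) (aK n) (βK (ρK n) (aK n)) := fun n => rfl
  have hρK : ∀ n, ρK n ∈ G.PrefsK := by
    intro n
    induction n with
    | zero => exact ⟨rfl, trivial⟩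
    | succ n ih =>
      rw [hρKsucc]
      exact ⟨ih.1, ih.2, hβK (ρK n) ih (aK n)⟩
  have htrans : ∀ n, G.transK (s n) (aK n) (s (n + 1)) := fun n => hβK (ρK n) (hρK n) (aK n)
  have hne : ∀ n, (s n).Nonempty := by
    intro n
    cases n with
    | zero => exact ⟨G.init, rfl⟩
    | succ n => exact (htrans n).2
  have hobsEx : ∀ n, ∃ o, s n ⊆ G.obsSet o := by
    intro n
    cases n with
    | zero =>
      refine ⟨G.obsOf G.init, ?_⟩
      intro l hl
      have : l = G.init := hl
      rw [this]
      exact (G.obs_cover G.init).choose_spec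
    | succ n =>
      obtain ⟨⟨o, ho⟩, -⟩ := htrans n
      exact ⟨o, ho ▸ Set.inter_subset_right⟩
  have hpost : ∀ n, s (n + 1) ⊆ G.Post (aK n) (s n) := by
    intro n
    obtain ⟨⟨o, ho⟩, -⟩ := htrans n
    rw [ho]
    exact Set.inter_subset_left
  have hobsc : ∀ n l, l ∈ s n → G.obsOf l = G.obsK (s n) := by
    intro n l hl
    obtain ⟨o, ho⟩ := hobsEx n
    have h1 : G.obsOf l = o := G.obs_disjoint _ _ l (G.obs_cover l).choose_spec (ho hl)
    have hexo : ∃ o', s n ⊆ G.obsSet o' := ⟨o, ho⟩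
    have h2 : G.obsK (s n) = o := by
      rw [GameStruct.obsK, dif_pos hexo]
      obtain ⟨x, hx⟩ := hne n
      exact G.obs_disjoint _ _ x (hexo.choose_spec hx) (ho hx)
    rw [h1, h2]
  -- `ext m n` : states of `s n` from which the play can be extended `m` more steps
  set ext : ℕ → ℕ → Set L := fun m => Nat.rec s
    (fun _ prev n => {l | l ∈ s n ∧ ∃ l', G.trans l (aK n) l' ∧ l' ∈ prev (n + 1)}) m
    with hextdef
  have hext0 : ∀ n, ext 0 n = s n := fun _ => rfl
  have hextS : ∀ m n,
      ext (m + 1) n = {l | l ∈ s n ∧ ∃ l', G.trans l (aK n) l' ∧ l' ∈ ext m (n + 1)} :=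
    fun _ _ => rfl
  have hsub : ∀ m n, ext m n ⊆ s n := by
    intro m n
    cases m with
    | zero => rw [hext0]
    | succ m => rw [hextS]; exact fun l hl => hl.1
  have hextne : ∀ m n, (ext m n).Nonempty := by
    intro m
    induction m with
    | zero => intro n; rw [hext0]; exact hne n
    | succ m ih =>
      intro n
      obtain ⟨l', hl'⟩ := ih (n + 1)
      obtain ⟨l, hl, ht⟩ := hpost n (hsub m (n + 1) hl')
      exact ⟨l, by rw [hextS]; exact ⟨hl, l', ht, hl'⟩⟩
  have hdec : ∀ m n, ext (m + 1) n ⊆ ext m n := by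
    intro m
    induction m with
    | zero => intro n; rw [hextS, hext0]; exact fun l hl => hl.1
    | succ m ih =>
      intro n l hl
      simp only [hextS, Set.mem_setOf_eq] at hl ⊢
      obtain ⟨h1, l', ht, hl'⟩ := hl
      exact ⟨h1, l', ht, ih (n + 1) hl'⟩
  set surv : ℕ → Set L := fun n => ⋂ m, ext m n with hsurvdef
  have hsurvsub : ∀ n, surv n ⊆ s n := fun n l hl => hsub 0 n (Set.mem_iInter.1 hl 0)
  have hstep : ∀ n x, x ∈ surv n → ∃ y, y ∈ surv (n + 1) ∧ G.trans x (aK n) y := by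
    intro n x hx
    have hTne : ∀ m, {y | G.trans x (aK n) y ∧ y ∈ ext m (n + 1)}.Nonempty := by
      intro m
      have hx' : x ∈ ext (m + 1) n := Set.mem_iInter.1 hx (m + 1)
      rw [hextS] at hx'
      obtain ⟨-, l', ht, hl'⟩ := hx'
      exact ⟨l', ht, hl'⟩
    have hTdec : ∀ m, {y | G.trans x (aK n) y ∧ y ∈ ext (m + 1) (n + 1)}
        ⊆ {y | G.trans x (aK n) y ∧ y ∈ ext m (n + 1)} :=
      fun m y hy => ⟨hy.1, hdec m (n + 1) hy.2⟩
    obtain ⟨y, hy⟩ := iInter_nonempty_of_antitone _ hTdec hTne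
    have hy' := Set.mem_iInter.1 hy
    exact ⟨y, Set.mem_iInter.2 fun m => (hy' m).2, (hy' 0).1⟩
  have hinit : G.init ∈ surv 0 := by
    refine Set.mem_iInter.2 fun m => ?_
    obtain ⟨x, hx⟩ := hextne m 0
    have hx0 : x = G.init := hsub m 0 hx
    rwa [hx0] at hx
  obtain ⟨c, hc0, hcS, hcR⟩ :=
    exists_chain surv (fun n x y => G.trans x (aK n) y) G.init hinit hstep
  have hcs : ∀ n, c n ∈ s n := fun n => hsurvsub n (hcS n)
  set β : Pref L A → A → L := fun ρ a =>
    if G.trans ρ.last a (c ρ.length) then c ρ.length else (G.total ρ.last a).choose with hβdef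
  have hβ : G.IsStrat2 β := by
    intro ρ _ a
    rw [hβdef]
    dsimp only
    split
    · assumption
    · exact (G.total ρ.last a).choose_spec
  have hρG : ∀ n, buildPref c aK n ∈ G.Prefs := by
    intro n
    induction n with
    | zero => exact ⟨hc0, trivial⟩
    | succ n ih => exact ⟨ih.1, ih.2, by rw [buildPref_last]; exact hcR n⟩
  have hτ : ∀ n, G.obsSeq (buildPref c aK n) = (ρK n).map G.obsK id := by
    intro n
    induction n with
    | zero =>
      show Pref.first (G.obsOf (c 0)) = Pref.first (G.obsK (s 0))
      rw [hobsc 0 (c 0) (hcs 0)]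
    | succ n ih =>
      show Pref.snoc (G.obsSeq (buildPref c aK n)) (aK n) (G.obsOf (c (n + 1)))
        = Pref.snoc ((ρK n).map G.obsK id) (aK n) (G.obsK (s (n + 1)))
      rw [ih, hobsc (n + 1) (c (n + 1)) (hcs (n + 1))]
  have hα : ∀ n, α (buildPref c aK n) = aK n := by
    intro n
    have hex : ∃ ρ ∈ G.Prefs, G.obsSeq ρ = (ρK n).map G.obsK id :=
      ⟨buildPref c aK n, hρG n, hτ n⟩
    have h1 : aK n = α hex.choose := by
      show f ((ρK n).map G.obsK id) = α hex.choose
      simp only [hf]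
      rw [dif_pos hex]
    obtain ⟨hmem, hseq⟩ := hex.choose_spec
    rw [h1]
    exact hobs _ (hρG n) _ hmem ((hτ n).trans hseq.symm)
  have hout : ∀ n, outPrefGen G.init α β n = buildPref c aK n := by
    intro n
    induction n with
    | zero => show Pref.first G.init = Pref.first (c 0); rw [hc0]
    | succ n ih =>
      show Pref.snoc (outPrefGen G.init α β n) (α (outPrefGen G.init α β n))
          (β (outPrefGen G.init α β n) (α (outPrefGen G.init α β n)))
        = Pref.snoc (buildPref c aK n) (aK n) (c (n + 1))
      rw [ih, hα n]
      congr 1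
      rw [hβdef]
      dsimp only
      rw [buildPref_length, buildPref_last, if_pos (hcR n)]
  have key := hwin β hβ
  have e1 : (fun n => G.obsK ((outcomeGen ({G.init} : Set L) αK βK).1 n))
      = fun n => G.obsOf ((outcomeGen G.init α β).1 n) := by
    funext n
    show G.obsK ((ρK n).last) = G.obsOf ((outPrefGen G.init α β n).last)
    rw [hout n, buildPref_last]
    exact (hobsc n (c n) (hcs n)).symm
  have e2 : (outcomeGen ({G.init} : Set L) αK βK).2 = (outcomeGen G.init α β).2 := by
    funext n
    show aK n = α (outPrefGen G.init α β n)
    rw [hout n, hα n]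
  rw [e1, e2]
  exact key

end Theorems
end

section
/- Let G be a game structure of imperfect information and G^K its knowledge-based subset construction. For every objective φ ⊆ (O×Σ)^ω, Player 1 has a deterministic observation-based sure-winning strategy in G for φ if and only if Player 1 has a deterministic sure-winning strategy in G^K for φ. -/
open scoped ENNReal

namespace SWProof

open Classical

variable {L A O : Type}

lemma obsOf_mem (G : GameStruct L A O) (l : L) : l ∈ G.obsSet (G.obsOf l) :=
  (G.obs_cover l).choose_spec

lemma obsK_eq_obsOf (G : GameStruct L A O) {s : Set L} {o : O} {l : L}
    (hl : l ∈ s) (hs : s ⊆ G.obsSet o) : G.obsK s = G.obsOf l := by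
  have h : ∃ o', s ⊆ G.obsSet o' := ⟨o, hs⟩
  rw [GameStruct.obsK, dif_pos h]
  exact G.obs_disjoint _ _ l (h.choose_spec hl) (obsOf_mem G l)

lemma prefs_snoc {G : GameStruct L A O} {ρ : Pref L A} {a : A} {l : L}
    (h : ρ ∈ G.Prefs) (ht : G.trans ρ.last a l) : Pref.snoc ρ a l ∈ G.Prefs :=
  ⟨h.1, h.2, ht⟩

lemma prefsK_snoc {G : GameStruct L A O} {σ : Pref (Set L) A} {a : A} {s : Set L}
    (h : σ ∈ G.PrefsK) (ht : G.transK σ.last a s) : Pref.snoc σ a s ∈ G.PrefsK :=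
  ⟨h.1, h.2, ht⟩

lemma lastK_nonempty {G : GameStruct L A O} {σ : Pref (Set L) A}
    (h : σ ∈ G.PrefsK) : (Pref.last σ).Nonempty := by
  obtain ⟨h1, h2⟩ := h
  cases σ with
  | first s =>
      have : s = {G.init} := h1
      subst this
      exact ⟨G.init, rfl⟩
  | snoc σ a s => exact h2.2.2

/-- Knowledge sets from an observation sequence. -/
noncomputable def kmapO (G : GameStruct L A O) : Pref O A → Pref (Set L) A
  | .first _ => .first {G.init}
  | .snoc τ a o => .snoc (kmapO G τ) a (G.Post a (kmapO G τ).last ∩ G.obsSet o)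

/-- Play Player-2 strategy `β` of `G` along the actions of a `Gᴷ`-prefix. -/
def gmapB (G : GameStruct L A O) (β : Pref L A → A → L) : Pref (Set L) A → Pref L A
  | .first _ => .first G.init
  | .snoc σ a _ => .snoc (gmapB G β σ) a (β (gmapB G β σ) a)

noncomputable def pickB (G : GameStruct L A O) (β : Pref L A → A → L)
    (σ : Pref (Set L) A) (a : A) : L :=
  if β (gmapB G β σ) a ∈ G.Post a σ.last then β (gmapB G β σ) a
  else if h : (G.Post a σ.last).Nonempty then h.choose else G.init

noncomputable def betaKB (G : GameStruct L A O) (β : Pref L A → A → L)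
    (σ : Pref (Set L) A) (a : A) : Set L :=
  G.Post a σ.last ∩ G.obsSet (G.obsOf (pickB G β σ a))

lemma pickB_mem (G : GameStruct L A O) (β : Pref L A → A → L)
    {σ : Pref (Set L) A} {a : A} (hne : (Pref.last σ).Nonempty) :
    pickB G β σ a ∈ G.Post a σ.last := by
  unfold pickB
  split_ifs with h1 h2
  · exact h1
  · exact h2.choose_spec
  · exact absurd ⟨(G.total hne.choose a).choose, hne.choose,
      hne.choose_spec, (G.total hne.choose a).choose_spec⟩ h2

lemma betaKB_strat2K (G : GameStruct L A O) (β : Pref L A → A → L) :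
    G.IsStrat2K (betaKB G β) := by
  intro σ hσ a
  exact ⟨⟨_, rfl⟩, pickB G β σ a, pickB_mem G β (lastK_nonempty hσ), obsOf_mem G _⟩

lemma K_to_G (G : GameStruct L A O) (φ : Set ((ℕ → O) × (ℕ → A)))
    (h : G.SureWinK φ) : G.SureWinG φ := by
  obtain ⟨αK, hαK⟩ := h
  refine ⟨fun ρ => αK (kmapO G (G.obsSeq ρ)), fun ρ _ ρ' _ heq => by
    show αK (kmapO G (G.obsSeq ρ)) = αK (kmapO G (G.obsSeq ρ')); rw [heq], ?_⟩
  intro β hβ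
  set αg : Pref L A → A := fun ρ => αK (kmapO G (G.obsSeq ρ)) with hαg
  have key : ∀ n,
      outPrefGen G.init αg β n ∈ G.Prefs ∧
      outPrefGen ({G.init} : Set L) αK (betaKB G β) n
        = kmapO G (G.obsSeq (outPrefGen G.init αg β n)) ∧
      gmapB G β (outPrefGen ({G.init} : Set L) αK (betaKB G β) n)
        = outPrefGen G.init αg β n ∧
      (outPrefGen G.init αg β n).last
        ∈ (outPrefGen ({G.init} : Set L) αK (betaKB G β) n).last ∧
      (∃ o, (outPrefGen ({G.init} : Set L) αK (betaKB G β) n).last ⊆ G.obsSet o) := by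
    intro n
    induction n with
    | zero =>
        refine ⟨⟨rfl, trivial⟩, rfl, rfl, rfl, G.obsOf G.init, ?_⟩
        exact Set.singleton_subset_iff.mpr (obsOf_mem G G.init)
    | succ n ih =>
        obtain ⟨hP, hk, hg, hm, -⟩ := ih
        set ρ := outPrefGen G.init αg β n with hρ
        set σ := outPrefGen ({G.init} : Set L) αK (betaKB G β) n with hσ
        have ha : αK σ = αg ρ := by rw [hk]
        set a := αg ρ with hadef
        set l' := β ρ a with hl'
        have htr : G.trans ρ.last a l' := hβ ρ hP a
        have hl'Post : l' ∈ G.Post a σ.last := ⟨ρ.last, hm, htr⟩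
        have hpick : pickB G β σ a = l' := by
          unfold pickB
          rw [hg, if_pos hl'Post]
        have hbk : betaKB G β σ a = G.Post a σ.last ∩ G.obsSet (G.obsOf l') := by
          rw [betaKB, hpick]
        have hρ1 : outPrefGen G.init αg β (n + 1) = Pref.snoc ρ a l' := rfl
        have hσ1 : outPrefGen ({G.init} : Set L) αK (betaKB G β) (n + 1)
            = Pref.snoc σ a (G.Post a σ.last ∩ G.obsSet (G.obsOf l')) := by
          show Pref.snoc σ (αK σ) (betaKB G β σ (αK σ)) = _
          rw [ha, hbk]
        refine ⟨?_, ?_, ?_, ?_, ?_⟩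
        · rw [hρ1]; exact prefs_snoc hP htr
        · rw [hρ1, hσ1]
          show _ = Pref.snoc (kmapO G (G.obsSeq ρ)) a
            (G.Post a (kmapO G (G.obsSeq ρ)).last ∩ G.obsSet (G.obsOf l'))
          rw [← hk]
        · rw [hρ1, hσ1]
          show Pref.snoc (gmapB G β σ) a (β (gmapB G β σ) a) = Pref.snoc ρ a l'
          rw [hg]
        · rw [hρ1, hσ1]
          exact ⟨hl'Post, obsOf_mem G l'⟩
        · rw [hσ1]
          exact ⟨G.obsOf l', Set.inter_subset_right⟩
  have hwin := hαK (betaKB G β) (betaKB_strat2K G β)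
  have hobs : (fun n => G.obsOf ((outcomeGen G.init αg β).1 n))
      = fun n => G.obsK ((outcomeGen ({G.init} : Set L) αK (betaKB G β)).1 n) := by
    funext n
    obtain ⟨-, -, -, hm, o, ho⟩ := key n
    exact (obsK_eq_obsOf G hm ho).symm
  have hact : (outcomeGen G.init αg β).2
      = (outcomeGen ({G.init} : Set L) αK (betaKB G β)).2 := by
    funext n
    obtain ⟨-, hk, -, -, -⟩ := key n
    show αg _ = αK _
    rw [hk]
  rw [hobs, hact]
  exact hwin

/-! ### Direction G → K -/

lemma antitone_inter_nonempty {X : Type} [Finite X] (C : ℕ → Set X)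
    (hA : ∀ m, C (m + 1) ⊆ C m) (hN : ∀ m, (C m).Nonempty) :
    (⋂ m, C m).Nonempty := by
  have hAnt : Antitone C := antitone_nat_of_succ_le hA
  have hex : (Set.range fun m => (C m).ncard).Nonempty := ⟨_, 0, rfl⟩
  obtain ⟨n0, hn0⟩ := Nat.sInf_mem hex
  have hmin : ∀ m, (C n0).ncard ≤ (C m).ncard := fun m =>
    le_trans (le_of_eq hn0) (Nat.sInf_le ⟨m, rfl⟩)
  have hsub : ∀ m, C n0 ⊆ C m := by
    intro m
    have h1 : C (max n0 m) ⊆ C n0 := hAnt (le_max_left _ _)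
    have h2 : C (max n0 m) ⊆ C m := hAnt (le_max_right _ _)
    have heq : C (max n0 m) = C n0 :=
      Set.eq_of_subset_of_ncard_le h1 (hmin _) (Set.toFinite _)
    rw [← heq]; exact h2
  obtain ⟨x, hx⟩ := hN n0
  exact ⟨x, Set.mem_iInter.mpr fun m => hsub m hx⟩

lemma konig [Finite L] (G : GameStruct L A O) (sC : ℕ → Set L) (aS : ℕ → A)
    (h0 : sC 0 = {G.init}) (hne : ∀ n, (sC n).Nonempty)
    (hstep : ∀ n, sC (n + 1) ⊆ G.Post (aS n) (sC n)) :
    ∃ l : ℕ → L, l 0 = G.init ∧ (∀ n, l n ∈ sC n) ∧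
      ∀ n, G.trans (l n) (aS n) (l (n + 1)) := by
  set W : ℕ → ℕ → Set L := fun n m =>
    {x | ∃ g : ℕ → L, g 0 = x ∧ (∀ i, i ≤ m → g i ∈ sC (n + i)) ∧
      ∀ i, i < m → G.trans (g i) (aS (n + i)) (g (i + 1))} with hW
  have hWA : ∀ n m, W n (m + 1) ⊆ W n m := by
    rintro n m x ⟨g, hg0, hg1, hg2⟩
    exact ⟨g, hg0, fun i hi => hg1 i (hi.trans (Nat.le_succ m)),
      fun i hi => hg2 i (hi.trans (Nat.lt_succ_self m))⟩
  have hback : ∀ n, ∀ x ∈ sC (n + 1), ∃ y ∈ sC n, G.trans y (aS n) x :=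
    fun n x hx => hstep n hx
  have hWne : ∀ m n, (W n m).Nonempty := by
    intro m
    induction m with
    | zero =>
        intro n
        obtain ⟨x, hx⟩ := hne n
        refine ⟨x, fun _ => x, rfl, ?_, fun i hi => absurd hi (Nat.not_lt_zero i)⟩
        intro i hi
        interval_cases i
        simpa using hx
    | succ m ih =>
        intro n
        obtain ⟨x', g', hg0, hg1, hg2⟩ := ih (n + 1)
        have hx' : x' ∈ sC (n + 1) := by
          have := hg1 0 (Nat.zero_le m)
          rwa [hg0, Nat.add_zero] at this
        obtain ⟨y, hy, hty⟩ := hback n x' hx'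
        refine ⟨y, fun i => Nat.casesOn i y g', rfl, ?_, ?_⟩
        · intro i hi
          cases i with
          | zero => simpa using hy
          | succ j =>
              have := hg1 j (Nat.le_of_succ_le_succ hi)
              have harith : n + 1 + j = n + (j + 1) := by omega
              rwa [harith] at this
        · intro i hi
          cases i with
          | zero => simpa [hg0] using hty
          | succ j =>
              have := hg2 j (Nat.lt_of_succ_lt_succ hi)
              have harith : n + 1 + j = n + (j + 1) := by omega
              rwa [harith] at this
  set V : ℕ → Set L := fun n => ⋂ m, W n m with hV
  have hVW : ∀ n x, x ∈ V n → ∀ m, x ∈ W n m := fun n x hx m => Set.mem_iInter.mp hx m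
  have hVsC : ∀ n x, x ∈ V n → x ∈ sC n := by
    intro n x hx
    obtain ⟨g, hg0, hg1, -⟩ := hVW n x hx 0
    have := hg1 0 (le_refl 0)
    rwa [hg0, Nat.add_zero] at this
  have hVne : ∀ n, (V n).Nonempty :=
    fun n => antitone_inter_nonempty (W n) (hWA n) (fun m => hWne m n)
  have hVstep : ∀ n x, x ∈ V n → ∃ y, y ∈ V (n + 1) ∧ G.trans x (aS n) y := by
    intro n x hx
    set U : ℕ → Set L := fun m => {y | G.trans x (aS n) y ∧ y ∈ W (n + 1) m} with hU
    have hUA : ∀ m, U (m + 1) ⊆ U m := fun m y hy => ⟨hy.1, hWA (n + 1) m hy.2⟩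
    have hUne : ∀ m, (U m).Nonempty := by
      intro m
      obtain ⟨g, hg0, hg1, hg2⟩ := hVW n x hx (m + 1)
      refine ⟨g 1, ?_, fun i => g (i + 1), rfl, ?_, ?_⟩
      · have := hg2 0 (Nat.succ_pos m)
        rwa [hg0, Nat.add_zero] at this
      · intro i hi
        have := hg1 (i + 1) (Nat.succ_le_succ hi)
        have harith : n + (i + 1) = n + 1 + i := by omega
        rwa [harith] at this
      · intro i hi
        have := hg2 (i + 1) (Nat.succ_lt_succ hi)
        have harith : n + (i + 1) = n + 1 + i := by omega
        rwa [harith] at this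
    obtain ⟨y, hy⟩ := antitone_inter_nonempty U hUA hUne
    refine ⟨y, Set.mem_iInter.mpr fun m => (Set.mem_iInter.mp hy m).2,
      (Set.mem_iInter.mp hy 0).1⟩
  choose next hnextV hnextT using hVstep
  let f : ∀ n : ℕ, {x : L // x ∈ V n} := fun n =>
    Nat.rec ⟨(hVne 0).choose, (hVne 0).choose_spec⟩
      (fun k p => ⟨next k p.1 p.2, hnextV k p.1 p.2⟩) n
  refine ⟨fun n => (f n).1, ?_, fun n => hVsC n (f n).1 (f n).2,
    fun n => hnextT n (f n).1 (f n).2⟩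
  have : (f 0).1 ∈ sC 0 := hVsC 0 (f 0).1 (f 0).2
  rw [h0] at this
  exact this

noncomputable def abar (G : GameStruct L A O) (α : Pref L A → A) (τ : Pref O A) : A :=
  if h : ∃ ρ, ρ ∈ G.Prefs ∧ G.obsSeq ρ = τ then α h.choose else α (.first G.init)

lemma abar_eq {G : GameStruct L A O} {α : Pref L A → A} (hob : G.ObsBased α)
    {ρ : Pref L A} (hρ : ρ ∈ G.Prefs) : abar G α (G.obsSeq ρ) = α ρ := by
  have h : ∃ ρ', ρ' ∈ G.Prefs ∧ G.obsSeq ρ' = G.obsSeq ρ := ⟨ρ, hρ, rfl⟩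
  rw [abar, dif_pos h]
  exact hob _ h.choose_spec.1 _ hρ h.choose_spec.2

lemma G_to_K [Finite L] (G : GameStruct L A O) (φ : Set ((ℕ → O) × (ℕ → A)))
    (h : G.SureWinG φ) : G.SureWinK φ := by
  obtain ⟨α, hob, hα⟩ := h
  refine ⟨fun σ => abar G α (Pref.map G.obsK id σ), ?_⟩
  intro βK hβK
  set αK : Pref (Set L) A → A := fun σ => abar G α (Pref.map G.obsK id σ) with hαKdef
  set σf : ℕ → Pref (Set L) A := fun n => outPrefGen ({G.init} : Set L) αK βK n with hσf
  have hσP : ∀ n, σf n ∈ G.PrefsK := by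
    intro n
    induction n with
    | zero => exact ⟨rfl, trivial⟩
    | succ n ih => exact prefsK_snoc ih (hβK (σf n) ih (αK (σf n)))
  set aS : ℕ → A := fun n => αK (σf n) with haS
  set sC : ℕ → Set L := fun n => (σf n).last with hsC
  have h0 : sC 0 = {G.init} := rfl
  have htK : ∀ n, G.transK (sC n) (aS n) (sC (n + 1)) :=
    fun n => hβK (σf n) (hσP n) (aS n)
  have hne : ∀ n, (sC n).Nonempty := by
    intro n
    cases n with
    | zero => exact ⟨G.init, rfl⟩
    | succ n => exact (htK n).2
  have hsub : ∀ n, sC (n + 1) ⊆ G.Post (aS n) (sC n) := by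
    intro n
    obtain ⟨o, ho⟩ := (htK n).1
    rw [ho]
    exact Set.inter_subset_left
  have hobsSub : ∀ n, ∃ o, sC (n + 1) ⊆ G.obsSet o := by
    intro n
    obtain ⟨o, ho⟩ := (htK n).1
    exact ⟨o, ho ▸ Set.inter_subset_right⟩
  obtain ⟨lp, hl0, hlmem, hltr⟩ := konig G sC aS h0 hne hsub
  have hoK : ∀ n, G.obsK (sC n) = G.obsOf (lp n) := by
    intro n
    cases n with
    | zero =>
        rw [hl0, h0]
        exact obsK_eq_obsOf G rfl (Set.singleton_subset_iff.mpr (obsOf_mem G G.init))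
    | succ n => exact obsK_eq_obsOf G (hlmem (n + 1)) (hobsSub n).choose_spec
  set β : Pref L A → A → L := fun ρ a' =>
    if G.trans ρ.last a' (lp ρ.length) then lp ρ.length
    else (G.total ρ.last a').choose with hβdef
  have hβ : G.IsStrat2 β := by
    intro ρ _ a'
    show G.trans ρ.last a' (if G.trans ρ.last a' (lp ρ.length) then lp ρ.length
      else (G.total ρ.last a').choose)
    split_ifs with hc
    · exact hc
    · exact (G.total ρ.last a').choose_spec
  have key : ∀ n,
      outPrefGen G.init α β n ∈ G.Prefs ∧
      (outPrefGen G.init α β n).length = n + 1 ∧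
      (outPrefGen G.init α β n).last = lp n ∧
      G.obsSeq (outPrefGen G.init α β n) = Pref.map G.obsK id (σf n) := by
    intro n
    induction n with
    | zero =>
        refine ⟨⟨rfl, trivial⟩, rfl, hl0.symm, ?_⟩
        show Pref.first (G.obsOf G.init) = Pref.first (G.obsK ({G.init} : Set L))
        rw [show G.obsK ({G.init} : Set L) = G.obsOf (lp 0) from hoK 0, hl0]
    | succ n ih =>
        obtain ⟨hP, hlen, hlast, hseq⟩ := ih
        set ρ := outPrefGen G.init α β n with hρ
        have haeq : α ρ = aS n := by
          show α ρ = abar G α (Pref.map G.obsK id (σf n))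
          rw [← hseq, abar_eq hob hP]
        have hnext : β ρ (α ρ) = lp (n + 1) := by
          have htr : G.trans ρ.last (α ρ) (lp ρ.length) := by
            rw [hlen, hlast, haeq]
            exact hltr n
          show (if G.trans ρ.last (α ρ) (lp ρ.length) then lp ρ.length
            else (G.total ρ.last (α ρ)).choose) = lp (n + 1)
          rw [if_pos htr, hlen]
        have hρ1 : outPrefGen G.init α β (n + 1) = Pref.snoc ρ (α ρ) (β ρ (α ρ)) := rfl
        have hσ1 : σf (n + 1) = Pref.snoc (σf n) (aS n) (βK (σf n) (aS n)) := rfl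
        refine ⟨?_, ?_, ?_, ?_⟩
        · rw [hρ1, hnext]
          exact prefs_snoc hP (by rw [haeq]; rw [haeq] at hnext; rw [← hnext]; exact hβ ρ hP (aS n))
        · rw [hρ1]
          show ρ.length + 1 = n + 1 + 1
          rw [hlen]
        · rw [hρ1, hnext]
          rfl
        · rw [hρ1, hσ1, hnext]
          show Pref.snoc (G.obsSeq ρ) (α ρ) (G.obsOf (lp (n + 1)))
            = Pref.snoc (Pref.map G.obsK id (σf n)) (aS n) (G.obsK (βK (σf n) (aS n)))
          rw [hseq, haeq]
          congr 1
          exact (hoK (n + 1)).symm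
  have hwin := hα β hβ
  have hobs : (fun n => G.obsK ((outcomeGen ({G.init} : Set L) αK βK).1 n))
      = fun n => G.obsOf ((outcomeGen G.init α β).1 n) := by
    funext n
    show G.obsK (sC n) = G.obsOf (outPrefGen G.init α β n).last
    rw [(key n).2.2.1, hoK n]
  have hact : (outcomeGen ({G.init} : Set L) αK βK).2 = (outcomeGen G.init α β).2 := by
    funext n
    show abar G α (Pref.map G.obsK id (σf n)) = α (outPrefGen G.init α β n)
    rw [← (key n).2.2.2, abar_eq hob (key n).1]
  rw [hobs, hact]
  exact hwin

end SWProof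

section Theorems

variable {L A O V : Type}

theorem stmt_5 [Finite L] [Finite A] [Finite O] (G : GameStruct L A O)
    (φ : Set ((ℕ → O) × (ℕ → A))) :
    G.SureWinG φ ↔ G.SureWinK φ := by
  exact ⟨SWProof.G_to_K G φ, SWProof.K_to_G G φ⟩

end Theorems
end

section
/- Let L be a finite set and 𝓛 = 2^L∖{∅}. For all downward-closed sets q, q' ⊆ 𝓛, one has ⌈q ∩ q'⌉ = ⌈q⌉ ⊓ ⌈q'⌉ and ⌈q ∪ q'⌉ = ⌈q⌉ ⊔ ⌈q'⌉. -/
open scoped ENNReal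

section Theorems

variable {L A O V : Type}

theorem exists_ceil_superset [Finite L] (q : Set (Set L)) (hq0 : NESets q)
    {s : Set L} (hs : s ∈ q) : ∃ m ∈ ceil q, s ⊆ m := by
  have hfin : ({s' ∈ q | s ⊆ s'} : Set (Set L)).Finite := Set.toFinite _
  obtain ⟨m, hm, hmax⟩ : ∃ m ∈ ({s' ∈ q | s ⊆ s'} : Set (Set L)),
      ∀ s' ∈ ({s' ∈ q | s ⊆ s'} : Set (Set L)), id m ≤ id s' → id m = id s' := by
    obtain ⟨m, hm⟩ := hfin.exists_maximal ⟨s, hs, subset_rfl⟩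
    exact ⟨m, hm.1, fun s' hs' h => le_antisymm h (hm.2 hs' h)⟩
  refine ⟨m, ⟨hm.1, hq0 m hm.1, ?_⟩, hm.2⟩
  intro s' hs' hss
  have := hmax s' ⟨hs', hm.2.trans hss.le⟩ hss.le
  exact hss.ne this

theorem stmt_7 [Finite L] (q q' : Set (Set L))
    (hq0 : NESets q) (hq0' : NESets q')
    (hq : DownClosed q) (hq' : DownClosed q') :
    ceil (q ∩ q') = meetOp (ceil q) (ceil q') ∧
    ceil (q ∪ q') = joinOp (ceil q) (ceil q') := by
  constructor
  · ext t
    constructor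
    · rintro ⟨⟨htq, htq'⟩, htne, hmax⟩
      obtain ⟨m, hm, htm⟩ := exists_ceil_superset q hq0 htq
      obtain ⟨m', hm', htm'⟩ := exists_ceil_superset q' hq0' htq'
      have hsub : t ⊆ m ∩ m' := Set.subset_inter htm htm'
      have hmm : m ∩ m' ∈ q ∩ q' :=
        ⟨hq m hm.1 _ Set.inter_subset_left (htne.mono hsub),
         hq' m' hm'.1 _ Set.inter_subset_right (htne.mono hsub)⟩
      have heq : t = m ∩ m' := by
        by_contra hne
        exact hmax _ hmm ⟨hsub, fun h => hne (hsub.antisymm h)⟩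
      refine ⟨⟨m, hm, m', hm', heq⟩, htne, ?_⟩
      rintro u ⟨s, hs, s', hs', rfl⟩ hlt
      exact hmax _ ⟨hq s hs.1 _ Set.inter_subset_left (htne.mono hlt.le),
        hq' s' hs'.1 _ Set.inter_subset_right (htne.mono hlt.le)⟩ hlt
    · rintro ⟨⟨s, hs, s', hs', rfl⟩, htne, hmax⟩
      refine ⟨⟨hq s hs.1 _ Set.inter_subset_left htne,
        hq' s' hs'.1 _ Set.inter_subset_right htne⟩, htne, ?_⟩
      intro u ⟨huq, huq'⟩ hlt
      obtain ⟨m, hm, hum⟩ := exists_ceil_superset q hq0 huq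
      obtain ⟨m', hm', hum'⟩ := exists_ceil_superset q' hq0' huq'
      exact hmax _ ⟨m, hm, m', hm', rfl⟩
        (hlt.trans_le (Set.subset_inter hum hum'))
  · ext t
    constructor
    · rintro ⟨ht, htne, hmax⟩
      have htc : t ∈ ceil q ∪ ceil q' := by
        rcases ht with h | h
        · exact Or.inl ⟨h, htne, fun s' hs' => hmax s' (Or.inl hs')⟩
        · exact Or.inr ⟨h, htne, fun s' hs' => hmax s' (Or.inr hs')⟩
      refine ⟨htc, htne, ?_⟩
      rintro s' (hs' | hs') hlt
      · exact hmax s' (Or.inl hs'.1) hlt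
      · exact hmax s' (Or.inr hs'.1) hlt
    · rintro ⟨ht, htne, hmax⟩
      have htq : t ∈ q ∪ q' := by
        rcases ht with h | h
        · exact Or.inl h.1
        · exact Or.inr h.1
      refine ⟨htq, htne, ?_⟩
      rintro u (hu | hu) hlt
      · obtain ⟨m, hm, hum⟩ := exists_ceil_superset q hq0 hu
        exact hmax m (Or.inl hm) (hlt.trans_le hum)
      · obtain ⟨m, hm, hum⟩ := exists_ceil_superset q' hq0' hu
        exact hmax m (Or.inr hm) (hlt.trans_le hum)

end Theorems
end

section
/- Let G be a game structure of imperfect information, G^K its knowledge-based subset construction with state set 𝓛 = 2^L∖{∅}, and CPre the controllable predecessor operator on 2^𝓛. For every downward-closed set q ⊆ 𝓛, the set CPre(q) is downward closed. -/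
open scoped ENNReal

section Theorems

variable {L A O V : Type}

theorem stmt_8 [Finite L] [Finite A] [Finite O] (G : GameStruct L A O)
    (q : Set (Set L)) (h0 : NESets q) (h : DownClosed q) :
    DownClosed (G.CPre q) := by
  rintro s ⟨_, a, ha⟩ t hts htne
  refine ⟨htne, a, fun s' hs' => ?_⟩
  obtain ⟨⟨o, ho⟩, hne⟩ := hs'
  have hsub : s' ⊆ G.Post a s ∩ G.obsSet o := by
    rw [ho]
    exact Set.inter_subset_inter_left _ (fun l' ⟨l, hl, htr⟩ => ⟨l, hts hl, htr⟩)
  have : G.Post a s ∩ G.obsSet o ∈ q :=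
    ha _ ⟨⟨o, rfl⟩, hne.mono hsub⟩
  exact h _ this s' hsub hne

end Theorems
end

section
/- Let G be a game structure of imperfect information and H = Knw(G). For all q1 ∈ Q and all σ ∈ Σ, if (q1, σ, q1') ∈ Δ_H, then for all q2' ∈ [q1']_≈ there exists q2 ∈ [q1]_≈ such that (q2, σ, q2') ∈ Δ_H. -/
open scoped ENNReal

section Theorems

variable {L A O V : Type}

theorem stmt_12 [Finite L] [Finite A] [Finite O] (G : GameStruct L A O)
    (q1 q1' : Set L × L) (a : A) (h : G.transH q1 a q1')
    (q2' : Set L × L) (h2' : G.inQ q2') (heq : q2'.1 = q1'.1) :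
    ∃ q2 : Set L × L, G.inQ q2 ∧ q2.1 = q1.1 ∧ G.transH q2 a q2' := by
  obtain ⟨hq1, hq1', ⟨o, ho⟩, htr⟩ := h
  have hmem : q2'.2 ∈ G.Post a q1.1 ∩ G.obsSet o := by
    rw [← ho, ← heq]; exact h2'.2
  obtain ⟨l, hl, hlt⟩ := hmem.1
  refine ⟨(q1.1, l), ⟨hq1.1, hl⟩, rfl, ⟨hq1.1, hl⟩, h2', ⟨o, by rw [heq, ho]⟩, hlt⟩

end Theorems
end
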